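/- arXiv:1808.00604 — 3 statements merged into one kernel-verified Lean document; each statement's English description precedes it below -/
import Mathlib

section
/- Up to isomorphism, the irreducible quaternionic representations of C_n are exactly Ψ_0, Ψ_1, ..., Ψ_{⌊n/2⌋}, and these are pairwise non-isomorphic. -/
/-!
Restricting scalars along `ℂ ⊂ ℍ`, the generator `T` is annihilated by `X ^ n - 1 = ∏ (X - ζ ^ k)`,
so some `T - ζ ^ k` has a kernel: there is `w ≠ 0` with `T w = ζ ^ k • w`. Its `ℍ`-span is
invariant, hence everything, and `q ↦ q • w` identifies `M` with `Ψ_k`. Replacing `w` by `j • w`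
replaces `ζ ^ k` by `conj (ζ ^ k) = ζ ^ (n - k)`, so `k ≤ n / 2` may be assumed. An isomorphism
`Ψ_r ≅ Ψ_s` is right multiplication by some `u ≠ 0` with `ζ ^ r u = u ζ ^ s`; conjugate
quaternions have equal real parts, and `cos (2πr/n)` determines `r ≤ n / 2`. Each `Ψ_r` is
irreducible because `ℍ` is a division ring.
-/

open scoped Quaternion

/-- `ζ_n = e^{2πi/n}`. -/
noncomputable def zeta (n : ℕ) : ℂ := Complex.exp (2 * Real.pi * Complex.I / n)

/-- The standard embedding of `ℂ` into the quaternions `ℍ`. -/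
noncomputable def cq : ℂ →+* ℍ[ℝ] where
  toFun z := ⟨z.re, z.im, 0, 0⟩
  map_one' := by ext <;> simp
  map_mul' z w := by
    change (⟨(z * w).re, (z * w).im, 0, 0⟩ : ℍ[ℝ]) =
      (⟨z.re, z.im, 0, 0⟩ : ℍ[ℝ]) * (⟨w.re, w.im, 0, 0⟩ : ℍ[ℝ])
    ext <;> simp [Quaternion.ext_iff, Complex.mul_re, Complex.mul_im] <;> ring
  map_zero' := by ext <;> simp
  map_add' z w := by
    change (⟨(z + w).re, (z + w).im, 0, 0⟩ : ℍ[ℝ]) =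
      (⟨z.re, z.im, 0, 0⟩ : ℍ[ℝ]) + (⟨w.re, w.im, 0, 0⟩ : ℍ[ℝ])
    ext <;> simp

open Polynomial ComplexConjugate Real

theorem Module.End.exists_hasEigenvalue_of_not_injective_aeval_prod {R M ι : Type*} [CommRing R]
    [AddCommGroup M] [Module R M] (f : Module.End R M) (s : Finset ι) (a : ι → R)
    (h : ¬ Function.Injective (aeval f (∏ i ∈ s, (X - C (a i))))) :
    ∃ i ∈ s, f.HasEigenvalue (a i) := by
  classical
  induction s using Finset.induction_on with
  | empty =>
    rw [Finset.prod_empty, map_one] at h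
    exact absurd (fun _ _ => id) h
  | insert j s hj ih =>
    rw [Finset.prod_insert hj, map_mul, Module.End.mul_eq_comp, LinearMap.coe_comp, map_sub,
      aeval_X, aeval_C] at h
    by_cases hs : Function.Injective (aeval f (∏ i ∈ s, (X - C (a i))))
    · refine ⟨j, Finset.mem_insert_self j s, ?_⟩
      rw [Module.End.hasEigenvalue_iff, Module.End.eigenspace_def, Ne, LinearMap.ker_eq_bot,
        ← Algebra.algebraMap_eq_smul_one]
      exact fun hj => h (hj.comp hs)
    · obtain ⟨i, hi, hμ⟩ := ih hs
      exact ⟨i, Finset.mem_insert_of_mem hi, hμ⟩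

theorem exists_eigenvector_of_pow_eq_one {K A M : Type*} [CommRing K] [IsDomain K] [Ring A]
    [AddCommGroup M] [Module A M] [Nontrivial M] (φ : K →+* A) {ζ : K} {n : ℕ}
    (hζ : IsPrimitiveRoot ζ n) (hn : 0 < n) (T : M →ₗ[A] M) (hT : T ^ n = 1) :
    ∃ k < n, ∃ w : M, w ≠ 0 ∧ T w = φ (ζ ^ k) • w := by
  let _ : Module K M := Module.compHom M φ
  let S : Module.End K M := { T with map_smul' := fun z x => T.map_smul (φ z) x }
  have hS : S ^ n = 1 := LinearMap.ext fun x => by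
    rw [Module.End.pow_apply, show ⇑S = ⇑T from rfl, ← Module.End.pow_apply, hT]; rfl
  have hprod := X_pow_sub_C_eq_prod hζ hn (one_pow n)
  simp only [mul_one] at hprod
  have hker : ¬ Function.Injective (aeval S (∏ i ∈ Finset.range n, (X - C (ζ ^ i)))) := by
    rw [← hprod, map_sub, map_pow, aeval_X, aeval_C, map_one, hS, sub_self]
    obtain ⟨x, hx⟩ := exists_ne (0 : M)
    exact fun h => hx (h rfl)
  obtain ⟨k, hk, hμ⟩ := S.exists_hasEigenvalue_of_not_injective_aeval_prod _ _ hker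
  obtain ⟨w, hw⟩ := hμ.exists_hasEigenvector
  exact ⟨k, Finset.mem_range.mp hk, w, hw.2, hw.apply_eq_smul⟩

section DivisionRing

variable {D M : Type*} [DivisionRing D] [AddCommGroup M] [Module D M] {T : M →ₗ[D] M}

theorem exists_linearEquiv_mul_right_of_apply_eq_smul
    (hirr : ∀ p : Submodule D M, (∀ x ∈ p, T x ∈ p) → p = ⊥ ∨ p = ⊤) {w : M} (hw : w ≠ 0)
    {a : D} (hTw : T w = a • w) : ∃ f : M ≃ₗ[D] D, ∀ x, f (T x) = f x * a := by
  have hspan : D ∙ w = ⊤ := by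
    refine (hirr _ fun x hx => ?_).resolve_left (Submodule.span_singleton_eq_bot.not.mpr hw)
    obtain ⟨q, rfl⟩ := Submodule.mem_span_singleton.mp hx
    rw [map_smul, hTw, smul_smul]
    exact Submodule.smul_mem _ _ (Submodule.mem_span_singleton_self w)
  let e : D ≃ₗ[D] M := (LinearEquiv.toSpanNonzeroSingleton D M w hw).trans
    ((LinearEquiv.ofEq _ _ hspan).trans (LinearEquiv.ofTop ⊤ rfl))
  have he : ∀ q, e q = q • w := fun _ => rfl
  refine ⟨e.symm, fun x => ?_⟩
  obtain ⟨q, rfl⟩ := e.surjective x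
  have : T (e q) = e (q * a) := by rw [he, he, map_smul, hTw, smul_smul]
  rw [this, e.symm_apply_apply, e.symm_apply_apply]

theorem exists_mul_eq_mul_of_linearEquiv {a b : D} (f g : M ≃ₗ[D] D)
    (hf : ∀ x, f (T x) = f x * a) (hg : ∀ x, g (T x) = g x * b) :
    ∃ u : D, u ≠ 0 ∧ a * u = u * b := by
  refine ⟨g (f.symm 1), by simp, ?_⟩
  have hT : T (f.symm 1) = f.symm a :=
    f.injective (by rw [hf, f.apply_symm_apply, f.apply_symm_apply, one_mul])
  calc a * g (f.symm 1) = g (f.symm (a • 1)) := by rw [map_smul, map_smul, smul_eq_mul]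
    _ = g (T (f.symm 1)) := by rw [smul_eq_mul, mul_one, hT]
    _ = g (f.symm 1) * b := hg _

end DivisionRing

theorem Quaternion.re_eq_of_mul_eq_mul {R : Type*} [Field R] [LinearOrder R] [IsStrictOrderedRing R]
    {a b u : ℍ[R]} (hu : u ≠ 0) (h : a * u = u * b) : a.re = b.re := by
  have re_mul_comm : ∀ x y : ℍ[R], (x * y).re = (y * x).re := fun x y => by
    simp only [Quaternion.re_mul]; ring
  rw [← mul_inv_cancel_right₀ hu a, h, mul_assoc, re_mul_comm, mul_assoc, inv_mul_cancel₀ hu,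
    mul_one]

theorem re_cq (z : ℂ) : (cq z).re = z.re := rfl

theorem exists_mul_cq_eq_cq_conj_mul : ∃ u : ℍ[ℝ], u ≠ 0 ∧ ∀ z, u * cq z = cq (conj z) * u := by
  refine ⟨⟨0, 0, 1, 0⟩, fun h => by simpa using congrArg QuaternionAlgebra.imJ h, fun z => ?_⟩
  show (⟨0, 0, 1, 0⟩ : ℍ[ℝ]) * ⟨z.re, z.im, 0, 0⟩ = ⟨(conj z).re, (conj z).im, 0, 0⟩ * ⟨0, 0, 1, 0⟩
  ext <;> simp

theorem isPrimitiveRoot_zeta {n : ℕ} (hn : 0 < n) : IsPrimitiveRoot (zeta n) n :=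
  Complex.isPrimitiveRoot_exp n hn.ne'

theorem re_zeta_pow (n r : ℕ) : (zeta n ^ r).re = cos (2 * π * r / n) := by
  rw [zeta, ← Complex.exp_nat_mul, ← Complex.exp_ofReal_mul_I_re]
  push_cast
  ring_nf

theorem conj_zeta_pow {n k : ℕ} (hn : 0 < n) (hk : k ≤ n) :
    conj (zeta n ^ k) = zeta n ^ (n - k) := by
  have hζ := isPrimitiveRoot_zeta hn
  rw [← Complex.inv_eq_conj (by rw [norm_pow, hζ.norm'_eq_one hn.ne', one_pow])]
  exact inv_eq_of_mul_eq_one_left (by rw [← pow_add, Nat.sub_add_cancel hk, hζ.pow_eq_one])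

theorem injOn_re_zeta_pow {n : ℕ} (hn : 0 < n) :
    Set.InjOn (fun r : ℕ => (zeta n ^ r).re) {r | r ≤ n / 2} := by
  have hn' : (0 : ℝ) < n := by exact_mod_cast hn
  have hangle : Function.Injective (fun r : ℕ => 2 * π * r / n) := fun r₁ r₂ h => by
    have hπ := pi_ne_zero
    field_simp at h
    exact_mod_cast h
  have hmaps : Set.MapsTo (fun r : ℕ => 2 * π * r / n) {r | r ≤ n / 2} (Set.Icc 0 π) := by
    intro r (hr : r ≤ n / 2)
    have : (2 * r : ℝ) ≤ n := by exact_mod_cast (by omega : 2 * r ≤ n)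
    refine ⟨by positivity, ?_⟩
    rw [div_le_iff₀ hn']
    nlinarith [pi_pos]
  simpa only [Function.comp_def, ← re_zeta_pow] using injOn_cos.comp hangle.injOn hmaps

theorem exists_eigenvector_cq_zeta_pow {n : ℕ} (hn : 0 < n) {M : Type*} [AddCommGroup M]
    [Module ℍ[ℝ] M] [Nontrivial M] (T : M →ₗ[ℍ[ℝ]] M) (hT : T ^ n = 1) :
    ∃ k ≤ n / 2, ∃ w : M, w ≠ 0 ∧ T w = cq (zeta n ^ k) • w := by
  obtain ⟨k, hk, w, hw, hTw⟩ :=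
    exists_eigenvector_of_pow_eq_one cq (isPrimitiveRoot_zeta hn) hn T hT
  by_cases hkn : k ≤ n / 2
  · exact ⟨k, hkn, w, hw, hTw⟩
  obtain ⟨u, hu, hcomm⟩ := exists_mul_cq_eq_cq_conj_mul
  refine ⟨n - k, by omega, u • w, smul_ne_zero hu hw, ?_⟩
  rw [map_smul, hTw, smul_smul, hcomm, conj_zeta_pow hn hk.le, mul_smul]

/-- A quaternionic `C_n`-representation is modelled by the action `T` of the generator, with
`T ^ n = 1`; uniqueness of `r` encodes that the `Ψ_r` are pairwise non-isomorphic. -/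
theorem irreducible_quaternionic_rep_classification (n : ℕ) (hn : 0 < n) :
    (∀ r : ℕ, r ≤ n / 2 → ∀ p : Submodule ℍ[ℝ] ℍ[ℝ],
        (∀ x ∈ p, x * cq (zeta n ^ (r : ℤ)) ∈ p) → p = ⊥ ∨ p = ⊤)
    ∧ (∀ (M : Type) [AddCommGroup M] [Module ℍ[ℝ] M] (T : M →ₗ[ℍ[ℝ]] M),
        T ^ n = 1 → Nontrivial M →
        (∀ p : Submodule ℍ[ℝ] M, (∀ x ∈ p, T x ∈ p) → p = ⊥ ∨ p = ⊤) →
        ∃! r : ℕ, r ≤ n / 2 ∧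
          ∃ f : M ≃ₗ[ℍ[ℝ]] ℍ[ℝ], ∀ x : M, f (T x) = f x * cq (zeta n ^ (r : ℤ))) := by
  simp only [zpow_natCast]
  refine ⟨fun _ _ p _ => IsSimpleOrder.eq_bot_or_eq_top p, fun M _ _ T hT _ hirr => ?_⟩
  obtain ⟨k, hk, w, hw, hTw⟩ := exists_eigenvector_cq_zeta_pow hn T hT
  obtain ⟨f, hf⟩ := exists_linearEquiv_mul_right_of_apply_eq_smul hirr hw hTw
  refine ⟨k, ⟨hk, f, hf⟩, fun r ⟨hr, g, hg⟩ => ?_⟩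
  obtain ⟨u, hu, hconj⟩ := exists_mul_eq_mul_of_linearEquiv g f hg hf
  have hre := Quaternion.re_eq_of_mul_eq_mul hu hconj
  rw [re_cq, re_cq] at hre
  exact injOn_re_zeta_pow hn hr hk hre
end

section
/- Let W_k = ⊕_{i=0}^{k−1} Ψ_i be the direct sum of the quaternionic C_n-representations Ψ_0, ..., Ψ_{k−1}. Then the real dimension of the Φ_k-isotypical component of the underlying complex representation of W_k is 4·⌊k/n⌋ + 2·⌊2(k − ⌊k/n⌋·n)/(n+1)⌋, and this quantity is non-decreasing in k. -/
open Module Module.End Finset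

namespace Module.Basis

variable {K V ι : Type*} [Field K] [AddCommGroup V] [Module K V]
  (b : Basis ι K V) {T : End K V} {d : ι → K}

theorem repr_apply_of_apply_eq_smul (hT : ∀ i, T (b i) = d i • b i) (v : V) (i : ι) :
    b.repr (T v) i = d i * b.repr v i := by
  have : (b.coord i).comp T = d i • b.coord i := b.ext fun j => by
    by_cases h : j = i
    · subst h; simp [hT]
    · simp [hT, Ne.symm h]
  simpa using LinearMap.congr_fun this v

theorem eigenspace_eq_span_of_apply_eq_smul (hT : ∀ i, T (b i) = d i • b i) (μ : K) :
    eigenspace T μ = Submodule.span K (b '' {i | d i = μ}) := by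
  ext v
  rw [mem_eigenspace_iff, b.mem_span_image, b.ext_elem_iff]
  simp only [repr_apply_of_apply_eq_smul b hT, map_smul, Finsupp.smul_apply, smul_eq_mul,
    ← sub_eq_zero (a := d _ * _), ← sub_mul, mul_eq_zero, sub_eq_zero, Set.subset_def,
    Finset.mem_coe, Finsupp.mem_support_iff, Set.mem_ofPred_eq]
  exact forall_congr' fun i => or_iff_not_imp_right

theorem finrank_eigenspace_of_apply_eq_smul [Fintype ι] [DecidableEq K]
    (hT : ∀ i, T (b i) = d i • b i) (μ : K) :
    finrank K (eigenspace T μ) = #{i | d i = μ} := by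
  rw [b.eigenspace_eq_span_of_apply_eq_smul hT, Set.image_eq_range, ← Fintype.card_subtype]
  exact finrank_span_eq_card (b.linearIndependent.comp _ Subtype.val_injective)

end Module.Basis

theorem Submodule.finrank_restrictScalars (F : Type*) {K V : Type*} [Field F] [Field K]
    [Algebra F K] [AddCommGroup V] [Module K V] [Module F V] [IsScalarTower F K V]
    (p : Submodule K V) :
    finrank F (p.restrictScalars F) = finrank F K * finrank K p := by
  rw [finrank_mul_finrank, ((p.restrictScalarsEquiv F K V).restrictScalars F).finrank_eq]

theorem finrank_eigenspace_of_apply_eq_prod_mul {ι : Type*} [Fintype ι] [DecidableEq ι]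
    {K : Type*} [Field K] [DecidableEq K] {a b : ι → K} (T : End K (ι → K × K))
    (hT : ∀ f i, T f i = (a i * (f i).1, b i * (f i).2)) (μ : K) :
    finrank K (eigenspace T μ) = #{i | a i = μ} + #{i | b i = μ} := by
  let d : (Σ _ : ι, Fin 2) → K := fun p => ![a p.1, b p.1] p.2
  have hTd : ∀ p, T (Pi.basis (fun _ => Basis.finTwoProd K) p) =
      d p • Pi.basis (fun _ => Basis.finTwoProd K) p := by
    rintro ⟨i, c⟩
    ext j : 1
    rw [Pi.basis_apply, hT]
    by_cases hij : j = i
    · subst hij; fin_cases c <;> simp [d]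
    · simp [hij]
  rw [Basis.finrank_eigenspace_of_apply_eq_smul _ hTd, card_filter, card_filter, card_filter,
    ← sum_add_distrib, Fintype.sum_sigma]
  exact sum_congr rfl fun i _ => Fin.sum_univ_two _

theorem Fin.card_filter_val_eq_count (k : ℕ) (P : ℕ → Prop) [DecidablePred P] :
    #{i : Fin k | P i} = Nat.count P k := by
  rw [Nat.count_eq_card_filter_range, card_filter, card_filter,
    Fin.sum_univ_eq_sum_range (fun i => if P i then 1 else 0)]

theorem zeta_zpow_eq_zpow_iff {n : ℕ} (hn : 0 < n) {a b : ℤ} :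
    zeta n ^ a = zeta n ^ b ↔ (a : ZMod n) = b := by
  have hζ : IsPrimitiveRoot (zeta n) n := Complex.isPrimitiveRoot_exp n hn.ne'
  rw [ZMod.intCast_eq_intCast_iff_dvd_sub, ← hζ.zpow_eq_one_iff_dvd, zpow_sub₀ (hζ.ne_zero hn.ne'),
    div_eq_one_iff_eq (zpow_ne_zero _ (hζ.ne_zero hn.ne')), eq_comm]

theorem zeta_zpow_eq_zpow_iff_modEq {n : ℕ} (hn : 0 < n) {i k : ℕ} :
    zeta n ^ (i : ℤ) = zeta n ^ (k : ℤ) ↔ i ≡ k [MOD n] := by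
  rw [zeta_zpow_eq_zpow_iff hn, Int.cast_natCast, Int.cast_natCast, ZMod.natCast_eq_natCast_iff]

theorem zeta_zpow_neg_eq_zpow_iff_modEq {n : ℕ} (hn : 0 < n) {i k : ℕ} :
    zeta n ^ (-(i : ℤ)) = zeta n ^ (k : ℤ) ↔ i ≡ n - k % n [MOD n] := by
  rw [zeta_zpow_eq_zpow_iff hn, ← ZMod.natCast_eq_natCast_iff, Nat.cast_sub (Nat.mod_lt _ hn).le,
    ZMod.natCast_self, ZMod.natCast_mod, zero_sub, Int.cast_neg, Int.cast_natCast, Int.cast_natCast,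
    neg_eq_iff_eq_neg]

theorem two_mul_div_succ_eq_ite {n r : ℕ} (hr : r < n) :
    2 * r / (n + 1) = if (n - r) % n < r then 1 else 0 := by
  rcases Nat.eq_zero_or_pos r with rfl | hr₀
  · simp
  rw [Nat.mod_eq_of_lt (by omega : n - r < n)]
  split_ifs with h
  · exact Nat.div_eq_of_lt_le (by omega) (by omega)
  · exact Nat.div_eq_of_lt (by omega)

theorem finrank_eigenspace_zeta_zpow {n : ℕ} (hn : 0 < n) {k : ℕ}
    (T : End ℂ (Fin k → ℂ × ℂ))
    (hT : ∀ (f : Fin k → ℂ × ℂ) (i : Fin k),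
      T f i = (zeta n ^ (i : ℤ) * (f i).1, zeta n ^ (-(i : ℤ)) * (f i).2)) :
    finrank ℂ (eigenspace T (zeta n ^ (k : ℤ))) = 2 * (k / n) + 2 * (k % n) / (n + 1) := by
  classical
  rw [finrank_eigenspace_of_apply_eq_prod_mul T hT]
  simp only [zeta_zpow_eq_zpow_iff_modEq hn, zeta_zpow_neg_eq_zpow_iff_modEq hn]
  rw [Fin.card_filter_val_eq_count k (· ≡ k [MOD n]), Nat.count_modEq_card _ hn,
    Fin.card_filter_val_eq_count k (· ≡ n - k % n [MOD n]), Nat.count_modEq_card _ hn,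
    if_neg (lt_irrefl _), two_mul_div_succ_eq_ite (Nat.mod_lt k hn)]
  omega

theorem four_mul_div_add_two_mul_mod_div_le_succ {n : ℕ} (hn : 0 < n) (m : ℕ) :
    4 * (m / n) + 2 * (2 * (m % n) / (n + 1))
      ≤ 4 * ((m + 1) / n) + 2 * (2 * ((m + 1) % n) / (n + 1)) := by
  have hm := Nat.mod_add_div m n
  have hr := Nat.mod_lt m hn
  rcases eq_or_ne (m % n + 1) n with hwrap | hwrap
  · have hq : (m + 1) / n = m / n + 1 :=
      ((Nat.div_mod_unique hn).2 ⟨(by rw [mul_add]; omega : 0 + n * (m / n + 1) = m + 1), hn⟩).1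
    have : 2 * (m % n) / (n + 1) < 2 := Nat.div_lt_of_lt_mul (by omega)
    omega
  · have hq : (m + 1) / n = m / n ∧ (m + 1) % n = m % n + 1 :=
      (Nat.div_mod_unique hn).2 ⟨by omega, by omega⟩
    have : 2 * (m % n) / (n + 1) ≤ 2 * (m % n + 1) / (n + 1) := Nat.div_le_div_right (by omega)
    rw [hq.1, hq.2]
    omega

/-- Let `W_k = ⊕_{i=0}^{k−1} Ψ_i`.  Its underlying complex representation
is `⊕_{i=0}^{k−1} (Φ_i ⊕ Φ_{−i})`, modeled on `Fin k → ℂ × ℂ` with the generator `T` acting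
on the `i`-th coordinate by `(ζ_n^i, ζ_n^{−i})`.  Then the real dimension of the
`Φ_k`-isotypical component (the `ζ_n^k`-eigenspace of `T`) of `W_k` is
`4·⌊k/n⌋ + 2·⌊2(k − ⌊k/n⌋·n)/(n+1)⌋`, and this quantity is non-decreasing in `k`. -/
theorem dim_isotypical_of_flag (n : ℕ) (hn : 0 < n) (k : ℕ)
    (T : (Fin k → ℂ × ℂ) →ₗ[ℂ] (Fin k → ℂ × ℂ))
    (hT : ∀ (f : Fin k → ℂ × ℂ) (i : Fin k),
      T f i = (zeta n ^ (i : ℤ) * (f i).1, zeta n ^ (-(i : ℤ)) * (f i).2)) :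
    Module.finrank ℝ
        ((Module.End.eigenspace T (zeta n ^ (k : ℤ))).restrictScalars ℝ)
      = 4 * (k / n) + 2 * (2 * (k - k / n * n) / (n + 1))
    ∧ ∀ m : ℕ, 4 * (m / n) + 2 * (2 * (m - m / n * n) / (n + 1))
        ≤ 4 * ((m + 1) / n) + 2 * (2 * ((m + 1) - (m + 1) / n * n) / (n + 1)) := by
  simp only [← Nat.mod_eq_sub_div_mul]
  refine ⟨?_, four_mul_div_add_two_mul_mod_div_le_succ hn⟩
  rw [Submodule.finrank_restrictScalars, Complex.finrank_real_complex,
    finrank_eigenspace_zeta_zpow hn T hT]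
  ring
end

section
/- Define real C_n-representations w_k = Φ_{−k} ⊗_ℂ (⊕_{i=0}^{k−1} Ψ_i) (restricted to real scalars). Then for every positive integer k and every divisor d of n, dim_ℝ(w_k^{dC_n}) ≤ dim_ℝ(w_{k+1}^{dC_n}), with strict inequality for the trivial subgroup; i.e., w_k ≪ w_{k+1}. -/
lemma zeta_pow_self (n : ℕ) : zeta n ^ n = 1 := by
  rcases eq_or_ne n 0 with rfl | hn
  · exact pow_zero _
  · exact (Complex.isPrimitiveRoot_exp n hn).pow_eq_one

lemma zpow_pow_eq_one_of_dvd {G : Type*} [DivisionMonoid G] {x : G} {e e' : ℤ} {d : ℕ}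
    (he : e ∣ e') (hx : (x ^ e) ^ d = 1) : (x ^ e') ^ d = 1 := by
  obtain ⟨m, rfl⟩ := he
  rw [zpow_mul, ← zpow_natCast, ← zpow_mul, mul_comm, zpow_mul, zpow_natCast, hx, one_zpow]

lemma coe_finRotate_symm {k : ℕ} (i : Fin k) :
    ((finRotate k).symm i : ℕ) = if (i : ℕ) = 0 then k - 1 else i - 1 := by
  obtain ⟨m, rfl⟩ : ∃ m, k = m + 1 := ⟨k - 1, by have := i.pos; omega⟩
  obtain ⟨j, rfl⟩ := (finRotate (m + 1)).surjective i
  rw [Equiv.symm_apply_apply, coe_finRotate]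
  split_ifs <;> simp_all [Fin.ext_iff]

lemma finrank_restrictScalars_le_of_injective {R S M N : Type*} [Field R] [Field S]
    [Algebra R S] [FiniteDimensional R S] [AddCommGroup M] [Module S M] [Module R M]
    [IsScalarTower R S M] [AddCommGroup N] [Module S N] [Module R N] [IsScalarTower R S N]
    [FiniteDimensional S N] {φ : M →ₗ[S] N} (hφ : Function.Injective φ)
    {p : Submodule S M} {q : Submodule S N} (hpq : ∀ x ∈ p, φ x ∈ q) :
    Module.finrank R (p.restrictScalars R) ≤ Module.finrank R (q.restrictScalars R) := by
  have : FiniteDimensional R N := Module.Finite.trans S N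
  exact LinearMap.finrank_le_finrank_of_injective (f := (φ.restrictScalars R).restrict hpq)
    fun x y hxy => Subtype.ext (hφ (congrArg Subtype.val hxy))

section Diagonal

variable {K ι η : Type*} [CommRing K]

open Function

def IsDiagonalPair (T : (ι → K × K) →ₗ[K] (ι → K × K)) (a b : ι → K) : Prop :=
  ∀ f i, T f i = (a i * (f i).1, b i * (f i).2)

noncomputable def extendByZeroPair (σ τ : ι → η) : (ι → K × K) →ₗ[K] (η → K × K) :=
  LinearMap.pi fun j =>
    (LinearMap.proj j ∘ₗ ExtendByZero.linearMap K σ ∘ₗ (LinearMap.fst K K K).compLeft ι).prod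
      (LinearMap.proj j ∘ₗ ExtendByZero.linearMap K τ ∘ₗ (LinearMap.snd K K K).compLeft ι)

lemma extendByZeroPair_apply (σ τ : ι → η) (f : ι → K × K) (j : η) :
    extendByZeroPair σ τ f j =
      (extend σ (fun i => (f i).1) 0 j, extend τ (fun i => (f i).2) 0 j) :=
  rfl

lemma extendByZeroPair_injective {σ τ : ι → η} (hσ : σ.Injective)
    (hτ : τ.Injective) : Function.Injective (extendByZeroPair (K := K) σ τ) := by
  intro f g h
  funext i
  have hσi := congrFun h (σ i)
  have hτi := congrFun h (τ i)
  simp only [extendByZeroPair_apply, hσ.extend_apply, hτ.extend_apply, Prod.ext_iff]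
    at hσi hτi
  exact Prod.ext hσi.1 hτi.2

lemma mul_extend_zero_eq_self [NoZeroDivisors K] {σ : ι → η} (hσ : σ.Injective) {c : ι → K}
    {c' : η → K} (hc : ∀ i, c i = 1 → c' (σ i) = 1) {g : ι → K} (hg : ∀ i, c i * g i = g i)
    (j : η) : c' j * extend σ g 0 j = extend σ g 0 j := by
  by_cases hj : ∃ i, σ i = j
  · obtain ⟨i, rfl⟩ := hj
    rw [hσ.extend_apply]
    rcases mul_eq_zero.mp (show (c i - 1) * g i = 0 by rw [sub_mul, one_mul, hg, sub_self])
      with hci | hgi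
    · rw [hc i (sub_eq_zero.mp hci), one_mul]
    · rw [hgi, mul_zero]
  · rw [extend_apply' _ _ _ hj, Pi.zero_apply, mul_zero]

variable {T : (ι → K × K) →ₗ[K] (ι → K × K)} {a b : ι → K}

lemma IsDiagonalPair.pow (hT : IsDiagonalPair T a b) (d : ℕ) :
    IsDiagonalPair (T ^ d) (fun i => a i ^ d) (fun i => b i ^ d) := by
  induction d with
  | zero => intro f i; simp
  | succ d ih =>
    intro f i
    rw [pow_succ', Module.End.mul_apply, hT, ih]
    simp only [pow_succ', mul_assoc]

lemma IsDiagonalPair.eq_id (hT : IsDiagonalPair T a b) (ha : ∀ i, a i = 1)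
    (hb : ∀ i, b i = 1) : T = LinearMap.id := by
  ext1 f
  funext i
  simp [hT f i, ha, hb]

lemma IsDiagonalPair.mem_ker_sub_id (hT : IsDiagonalPair T a b) {f : ι → K × K} :
    f ∈ LinearMap.ker (T - LinearMap.id) ↔
      ∀ i, a i * (f i).1 = (f i).1 ∧ b i * (f i).2 = (f i).2 := by
  simp only [LinearMap.mem_ker, LinearMap.sub_apply, LinearMap.id_apply, sub_eq_zero,
    funext_iff, hT f, Prod.ext_iff]

lemma IsDiagonalPair.extendByZeroPair_mem_ker [NoZeroDivisors K] {σ τ : ι → η}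
    (hσ : σ.Injective) (hτ : τ.Injective) {T' : (η → K × K) →ₗ[K] (η → K × K)} {a' b' : η → K}
    (hT : IsDiagonalPair T a b) (hT' : IsDiagonalPair T' a' b')
    (ha : ∀ i, a i = 1 → a' (σ i) = 1) (hb : ∀ i, b i = 1 → b' (τ i) = 1)
    {f : ι → K × K} (hf : f ∈ LinearMap.ker (T - LinearMap.id)) :
    extendByZeroPair σ τ f ∈ LinearMap.ker (T' - LinearMap.id) := by
  rw [hT.mem_ker_sub_id] at hf
  rw [hT'.mem_ker_sub_id]
  intro j
  simp only [extendByZeroPair_apply]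
  exact ⟨mul_extend_zero_eq_self hσ ha (fun i => (hf i).1) j,
    mul_extend_zero_eq_self hτ hb (fun i => (hf i).2) j⟩

end Diagonal

lemma IsDiagonalPair.finrank_ker_sub_id_le {R K ι η : Type*} [Field R] [Field K]
    [Algebra R K] [FiniteDimensional R K] [Finite η] {σ τ : ι → η} (hσ : σ.Injective)
    (hτ : τ.Injective)
    {T : (ι → K × K) →ₗ[K] (ι → K × K)} {T' : (η → K × K) →ₗ[K] (η → K × K)}
    {a b : ι → K} {a' b' : η → K} (hT : IsDiagonalPair T a b) (hT' : IsDiagonalPair T' a' b')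
    (ha : ∀ i, a i = 1 → a' (σ i) = 1) (hb : ∀ i, b i = 1 → b' (τ i) = 1) :
    Module.finrank R ((LinearMap.ker (T - LinearMap.id)).restrictScalars R)
      ≤ Module.finrank R ((LinearMap.ker (T' - LinearMap.id)).restrictScalars R) :=
  finrank_restrictScalars_le_of_injective (extendByZeroPair_injective hσ hτ)
    fun _ hf => hT.extendByZeroPair_mem_ker hσ hτ hT' ha hb hf

theorem w_k_ll_w_succ_general (n : ℕ) (k : ℕ) (d : ℕ)
    (T : (Fin k → ℂ × ℂ) →ₗ[ℂ] (Fin k → ℂ × ℂ))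
    (T' : (Fin (k + 1) → ℂ × ℂ) →ₗ[ℂ] (Fin (k + 1) → ℂ × ℂ))
    (hT : ∀ (f : Fin k → ℂ × ℂ) (i : Fin k),
      T f i = (zeta n ^ ((i : ℤ) - (k : ℤ)) * (f i).1,
               zeta n ^ (-(i : ℤ) - (k : ℤ)) * (f i).2))
    (hT' : ∀ (f : Fin (k + 1) → ℂ × ℂ) (i : Fin (k + 1)),
      T' f i = (zeta n ^ ((i : ℤ) - (k + 1 : ℤ)) * (f i).1,
                zeta n ^ (-(i : ℤ) - (k + 1 : ℤ)) * (f i).2)) :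
    Module.finrank ℝ ((LinearMap.ker (T ^ d - LinearMap.id)).restrictScalars ℝ)
      ≤ Module.finrank ℝ ((LinearMap.ker (T' ^ d - LinearMap.id)).restrictScalars ℝ)
    ∧ (d = n →
      Module.finrank ℝ ((LinearMap.ker (T ^ d - LinearMap.id)).restrictScalars ℝ)
        < Module.finrank ℝ ((LinearMap.ker (T' ^ d - LinearMap.id)).restrictScalars ℝ)) := by
  have hTd := IsDiagonalPair.pow hT d
  have hT'd := IsDiagonalPair.pow hT' d
  constructor
  · refine hTd.finrank_ker_sub_id_le (Fin.succ_injective k)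
      ((Fin.castSucc_injective k).comp (finRotate k).symm.injective) hT'd
      (fun i => zpow_pow_eq_one_of_dvd ⟨1, by simp only [Fin.val_succ]; omega⟩)
      (fun i => zpow_pow_eq_one_of_dvd ⟨if (i : ℕ) = 0 then 2 else 1, ?_⟩)
    -- the weight `ζ^{-k}` at index `0` moves to the weight `ζ^{-2k}` at index `k - 1`
    simp only [Function.comp_apply, Fin.val_castSucc, coe_finRotate_symm]
    split_ifs <;> omega
  · rintro rfl
    have hζ : ∀ e : ℤ, (zeta d ^ e) ^ d = 1 := fun e =>
      zpow_pow_eq_one_of_dvd (one_dvd e) (by rw [zpow_one, zeta_pow_self])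
    rw [hTd.eq_id (fun _ => hζ _) (fun _ => hζ _), hT'd.eq_id (fun _ => hζ _) (fun _ => hζ _),
      sub_self, sub_self, LinearMap.ker_zero, LinearMap.ker_zero, Submodule.restrictScalars_top,
      Submodule.restrictScalars_top, finrank_top, finrank_top]
    simp only [Module.finrank_pi_fintype, Module.finrank_prod, Complex.finrank_real_complex,
      Finset.sum_const, Finset.card_univ, Fintype.card_fin, smul_eq_mul]
    omega

/-- Let `w_k = Φ_{−k} ⊗_ℂ (⊕_{i=0}^{k−1} Ψ_i)` (restricted to real
scalars), modeled on `Fin k → ℂ × ℂ` with the generator `T` acting on the `i`-th coordinate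
by `(ζ_n^{i−k}, ζ_n^{−i−k})`.  The fixed points of the subgroup `dC_n` form the kernel of
`T^d − 1`.  Then for every positive integer `k` and every divisor `d` of `n`,
`dim_ℝ(w_k^{dC_n}) ≤ dim_ℝ(w_{k+1}^{dC_n})`, with strict inequality for the trivial subgroup
(`d = n`); i.e., `w_k ≪ w_{k+1}`. -/
theorem w_k_ll_w_succ (n : ℕ) (hn : 0 < n) (k : ℕ) (hk : 0 < k) (d : ℕ) (hd : d ∣ n)
    (T : (Fin k → ℂ × ℂ) →ₗ[ℂ] (Fin k → ℂ × ℂ))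
    (T' : (Fin (k + 1) → ℂ × ℂ) →ₗ[ℂ] (Fin (k + 1) → ℂ × ℂ))
    (hT : ∀ (f : Fin k → ℂ × ℂ) (i : Fin k),
      T f i = (zeta n ^ ((i : ℤ) - (k : ℤ)) * (f i).1,
               zeta n ^ (-(i : ℤ) - (k : ℤ)) * (f i).2))
    (hT' : ∀ (f : Fin (k + 1) → ℂ × ℂ) (i : Fin (k + 1)),
      T' f i = (zeta n ^ ((i : ℤ) - (k + 1 : ℤ)) * (f i).1,
                zeta n ^ (-(i : ℤ) - (k + 1 : ℤ)) * (f i).2)) :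
    Module.finrank ℝ ((LinearMap.ker (T ^ d - LinearMap.id)).restrictScalars ℝ)
      ≤ Module.finrank ℝ ((LinearMap.ker (T' ^ d - LinearMap.id)).restrictScalars ℝ)
    ∧ (d = n →
      Module.finrank ℝ ((LinearMap.ker (T ^ d - LinearMap.id)).restrictScalars ℝ)
        < Module.finrank ℝ ((LinearMap.ker (T' ^ d - LinearMap.id)).restrictScalars ℝ)) :=
  w_k_ll_w_succ_general n k d T T' hT hT'
end
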